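/- arXiv:cs/0506012 — 4 statements merged into one kernel-verified Lean document; each statement's English description precedes it below -/
import Mathlib

section
/- Let f be a sigmoidal efficiency function: f : [0,∞) → [0,1) is continuously differentiable, f(0) = 0, f′(γ) > 0 for all γ > 0, f(γ) → 1 as γ → ∞, and there exists a > 0 such that f″ > 0 on (0,a) and f″ < 0 on (a,∞). Then the equation f(γ) = γ f′(γ) has a unique positive solution γ*. Moreover, γ f′(γ) > f(γ) for all 0 < γ < γ*, and γ f′(γ) < f(γ) for all γ > γ*. -/
/-!
Put `F γ = γ f'(γ) - f(γ)`, so that `F' γ = γ f''(γ)`. On `(0, a]` the mean value theorem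
gives `f γ = γ f'(c)` for some `c < γ`, and `f'` is strictly increasing there, so `F > 0`.
On `[a, ∞)` the function `F` is strictly decreasing, and it must become negative: otherwise
`f γ / γ`, whose derivative is `F γ / γ²`, would be nondecreasing, so `f` would grow at least
linearly, contradicting `f < 1`. Hence `F` has exactly one positive zero, where it changes sign.
-/

open Set

section MulDerivSub

variable {f f' f'' : ℝ → ℝ}

lemma hasDerivAt_mul_deriv_sub {x : ℝ} (hf : HasDerivAt f (f' x) x)
    (hf' : HasDerivAt f' (f'' x) x) :
    HasDerivAt (fun y => y * f' y - f y) (x * f'' x) x :=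
  (((hasDerivAt_id' x).mul hf').sub hf).congr_deriv (by ring)

lemma lt_mul_deriv_of_deriv2_pos {x : ℝ} (hx : 0 < x) (hf : ContinuousOn f (Icc 0 x))
    (hf' : ∀ y ∈ Ioc 0 x, HasDerivAt f (f' y) y) (hf'' : ∀ y ∈ Ioc 0 x, HasDerivAt f' (f'' y) y)
    (hpos : ∀ y ∈ Ioo 0 x, 0 < f'' y) (hf0 : f 0 = 0) : f x < x * f' x := by
  have hmono : StrictMonoOn f' (Ioc 0 x) := by
    refine strictMonoOn_of_hasDerivWithinAt_pos (f' := f'') (convex_Ioc 0 x)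
      (fun y hy => (hf'' y hy).continuousAt.continuousWithinAt) ?_ ?_ <;> rw [interior_Ioc]
    · exact fun y hy => (hf'' y (Ioo_subset_Ioc_self hy)).hasDerivWithinAt
    · exact hpos
  obtain ⟨c, hc, hslope⟩ :=
    exists_hasDerivAt_eq_slope f f' hx hf fun y hy => hf' y (Ioo_subset_Ioc_self hy)
  have hfx : f x = x * f' c := by
    rw [hf0, sub_zero, sub_zero, eq_div_iff hx.ne'] at hslope
    linarith
  rw [hfx]
  exact mul_lt_mul_of_pos_left (hmono ⟨hc.1, hc.2.le⟩ ⟨hx, le_rfl⟩ hc.2) hx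

lemma strictAntiOn_mul_deriv_sub {a : ℝ} (ha : 0 ≤ a)
    (hf : ∀ x ∈ Ici a, HasDerivAt f (f' x) x) (hf' : ∀ x ∈ Ici a, HasDerivAt f' (f'' x) x)
    (hneg : ∀ x, a < x → f'' x < 0) :
    StrictAntiOn (fun x => x * f' x - f x) (Ici a) := by
  have hF : ∀ x ∈ Ici a, HasDerivAt (fun y => y * f' y - f y) (x * f'' x) x :=
    fun x hx => hasDerivAt_mul_deriv_sub (hf x hx) (hf' x hx)
  refine strictAntiOn_of_hasDerivWithinAt_neg (f' := fun x => x * f'' x) (convex_Ici a)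
    (fun x hx => (hF x hx).continuousAt.continuousWithinAt) ?_ ?_ <;> rw [interior_Ici]
  · exact fun x hx => (hF x (Ioi_subset_Ici_self hx)).hasDerivWithinAt
  · exact fun x hx => mul_neg_of_pos_of_neg (ha.trans_lt hx) (hneg x hx)

lemma monotoneOn_div_self_of_le_mul_deriv {a : ℝ} (ha : 0 < a)
    (hf : ∀ x ∈ Ici a, HasDerivAt f (f' x) x) (hle : ∀ x ∈ Ici a, f x ≤ x * f' x) :
    MonotoneOn (fun x => f x / x) (Ici a) := by
  have hdiv : ∀ x ∈ Ici a, HasDerivAt (fun y => f y / y) ((x * f' x - f x) / x ^ 2) x :=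
    fun x hx => ((hf x hx).div (hasDerivAt_id' x) (ha.trans_le hx).ne').congr_deriv (by ring)
  refine monotoneOn_of_hasDerivWithinAt_nonneg (f' := fun x => (x * f' x - f x) / x ^ 2)
    (convex_Ici a) (fun x hx => (hdiv x hx).continuousAt.continuousWithinAt) ?_ ?_ <;>
      rw [interior_Ici]
  · exact fun x hx => (hdiv x (Ioi_subset_Ici_self hx)).hasDerivWithinAt
  · exact fun x hx => div_nonneg (sub_nonneg.2 (hle x (Ioi_subset_Ici_self hx))) (sq_nonneg x)

lemma exists_mul_deriv_lt_of_bddAbove {a B : ℝ} (ha : 0 < a)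
    (hf : ∀ x ∈ Ici a, HasDerivAt f (f' x) x) (hfa : 0 < f a) (hB : ∀ x ∈ Ici a, f x ≤ B) :
    ∃ b ∈ Ici a, b * f' b < f b := by
  by_contra! hle
  have hmono := monotoneOn_div_self_of_le_mul_deriv ha hf hle
  -- At `b = a (B / f a + 1)` the linear lower bound `f b ≥ (f a / a) b` exceeds `B`.
  set b := a * (B / f a + 1)
  have hab : a ≤ b := le_mul_of_one_le_right ha.le
    (le_add_of_nonneg_left (div_nonneg ((hfa.trans_le (hB a self_mem_Ici)).le) hfa.le))
  have hlinear : f a / a * b ≤ f b :=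
    (le_div_iff₀ (ha.trans_le hab)).1 (hmono self_mem_Ici hab hab)
  have hb : f a / a * b = B + f a := by
    simp only [b]
    field_simp
  linarith [hB b hab]

end MulDerivSub

lemma exists_sign_change_of_strictAntiOn {F : ℝ → ℝ} {a b : ℝ} (ha : 0 < a)
    (hpos : ∀ x ∈ Ioc 0 a, 0 < F x) (hanti : StrictAntiOn F (Ici a))
    (hcont : ContinuousOn F (Ici a)) (hab : a ≤ b) (hb : F b < 0) :
    ∃ g, a < g ∧ F g = 0 ∧ (∀ x, 0 < x → x < g → 0 < F x) ∧ ∀ x, g < x → F x < 0 := by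
  have hFa : 0 < F a := hpos a ⟨ha, le_rfl⟩
  obtain ⟨g, hg, hFg⟩ := intermediate_value_Icc' hab (hcont.mono Icc_subset_Ici_self)
    ⟨hb.le, hFa.le⟩
  have hag : a < g := lt_of_le_of_ne hg.1 (by rintro rfl; linarith)
  refine ⟨g, hag, hFg, fun x hx hxg => ?_, fun x hgx => ?_⟩
  · rcases le_or_gt x a with hxa | hax
    · exact hpos x ⟨hx, hxa⟩
    · exact hFg ▸ hanti hax.le hag.le hxg
  · exact hFg ▸ hanti hag.le (hag.trans hgx).le hgx

theorem sigmoidal_unique_utility_maximizing_SIR_general (f f' f'' : ℝ → ℝ)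
    (hcontf : ContinuousOn f (Set.Ici 0))
    (hderiv : ∀ x : ℝ, 0 < x → HasDerivAt f (f' x) x)
    (hderiv2 : ∀ x : ℝ, 0 < x → HasDerivAt f' (f'' x) x)
    (hf0 : f 0 = 0)
    (hf'pos : ∀ x : ℝ, 0 < x → 0 < f' x)
    (hrange : ∀ x : ℝ, 0 ≤ x → 0 ≤ f x ∧ f x < 1)
    (a : ℝ) (ha : 0 < a)
    (hconvex : ∀ x : ℝ, 0 < x → x < a → 0 < f'' x)
    (hconcave : ∀ x : ℝ, a < x → f'' x < 0) :
    ∃ g : ℝ, 0 < g ∧ f g = g * f' g ∧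
      (∀ g' : ℝ, 0 < g' → f g' = g' * f' g' → g' = g) ∧
      (∀ γ : ℝ, 0 < γ → γ < g → f γ < γ * f' γ) ∧
      (∀ γ : ℝ, g < γ → γ * f' γ < f γ) := by
  have hderivIci : ∀ x ∈ Ici a, HasDerivAt f (f' x) x := fun x hx => hderiv x (ha.trans_le hx)
  have hderiv2Ici : ∀ x ∈ Ici a, HasDerivAt f' (f'' x) x := fun x hx => hderiv2 x (ha.trans_le hx)
  have hfmono : StrictMonoOn f (Ici 0) := by
    refine strictMonoOn_of_hasDerivWithinAt_pos (f' := f') (convex_Ici 0) hcontf ?_ ?_ <;>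
      rw [interior_Ici]
    · exact fun x hx => (hderiv x hx).hasDerivWithinAt
    · exact hf'pos
  have hfa : 0 < f a := hf0 ▸ hfmono self_mem_Ici ha.le ha
  have hpos : ∀ x ∈ Ioc 0 a, 0 < x * f' x - f x := fun x hx =>
    sub_pos.2 <| lt_mul_deriv_of_deriv2_pos hx.1 (hcontf.mono Icc_subset_Ici_self)
      (fun y hy => hderiv y hy.1) (fun y hy => hderiv2 y hy.1)
      (fun y hy => hconvex y hy.1 (hy.2.trans_le hx.2)) hf0
  have hcont : ContinuousOn (fun x => x * f' x - f x) (Ici a) := fun x hx =>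
    (hasDerivAt_mul_deriv_sub (hderivIci x hx) (hderiv2Ici x hx)).continuousAt.continuousWithinAt
  obtain ⟨b, hab, hb⟩ := exists_mul_deriv_lt_of_bddAbove ha hderivIci hfa
    (fun x hx => (hrange x (ha.le.trans hx)).2.le)
  obtain ⟨g, hag, hFg, hbelow, habove⟩ := exists_sign_change_of_strictAntiOn ha hpos
    (strictAntiOn_mul_deriv_sub ha.le hderivIci hderiv2Ici hconcave) hcont hab (sub_neg.2 hb)
  refine ⟨g, ha.trans hag, (sub_eq_zero.1 hFg).symm, fun g' hg' hg'root => ?_,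
    fun γ hγ hγg => sub_pos.1 (hbelow γ hγ hγg), fun γ hγ => sub_neg.1 (habove γ hγ)⟩
  have hFg' : g' * f' g' - f g' = 0 := sub_eq_zero.2 hg'root.symm
  rcases lt_trichotomy g' g with hlt | heq | hgt
  · exact absurd hFg' (hbelow g' hg' hlt).ne'
  · exact heq
  · exact absurd hFg' (habove g' hgt).ne

/-- For a sigmoidal efficiency function `f` (continuously differentiable
with derivative `f'` and second derivative `f''`, `f 0 = 0`, `f' > 0` on `(0,∞)`,
values in `[0,1)`, `f → 1` at `∞`, convex on `(0,a)` and concave on `(a,∞)` for some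
`a > 0`), the equation `f γ = γ * f' γ` has a unique positive solution `γ*`; moreover
`γ f'(γ) > f(γ)` for `0 < γ < γ*` and `γ f'(γ) < f(γ)` for `γ > γ*`. -/
theorem sigmoidal_unique_utility_maximizing_SIR (f f' f'' : ℝ → ℝ)
    (hcontf : ContinuousOn f (Set.Ici 0))
    (hderiv : ∀ x : ℝ, 0 < x → HasDerivAt f (f' x) x)
    (hcontf' : ContinuousOn f' (Set.Ioi 0))
    (hderiv2 : ∀ x : ℝ, 0 < x → HasDerivAt f' (f'' x) x)
    (hf0 : f 0 = 0)
    (hf'pos : ∀ x : ℝ, 0 < x → 0 < f' x)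
    (hrange : ∀ x : ℝ, 0 ≤ x → 0 ≤ f x ∧ f x < 1)
    (hlim : Filter.Tendsto f Filter.atTop (nhds 1))
    (a : ℝ) (ha : 0 < a)
    (hconvex : ∀ x : ℝ, 0 < x → x < a → 0 < f'' x)
    (hconcave : ∀ x : ℝ, a < x → f'' x < 0) :
    ∃ g : ℝ, 0 < g ∧ f g = g * f' g ∧
      (∀ g' : ℝ, 0 < g' → f g' = g' * f' g' → g' = g) ∧
      (∀ γ : ℝ, 0 < γ → γ < g → f γ < γ * f' γ) ∧
      (∀ γ : ℝ, g < γ → γ * f' γ < f γ) :=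
  sigmoidal_unique_utility_maximizing_SIR_general f f' f'' hcontf hderiv hderiv2 hf0 hf'pos hrange a
    ha hconvex hconcave
end

section
/- Consider K users with channel gains h₁,…,h_K > 0, noise power σ² > 0, processing gain N ≥ 1, and matched-filter output SIRs γ_k(p) = N p_k h_k² / (N σ² + ∑_{j≠k} p_j h_j²). Given target SIRs γ̃₁,…,γ̃_K > 0, if S := ∑_{k=1}^K γ̃_k/(N + γ̃_k) < 1 (equivalently ∑_k 1/(1 + N/γ̃_k) < 1), then there exists a unique vector of positive powers (p₁,…,p_K) with γ_k(p) = γ̃_k for all k, given explicitly by p_k = (1/h_k²) · N γ̃_k σ² / ((N + γ̃_k)(1 − S)). -/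
/-! In the received powers `x k = p k * h k ^ 2`, the target `γ_k(p) = γ̃_k` is linear:
`x k = a k * (N σ² + ∑ j, x j)` with `a k = γ̃_k / (N + γ̃_k)`. Summing over `k` gives
`∑ j, x j = S * (N σ² + ∑ j, x j)`, so for `S ≠ 1` the total received power plus noise is
`N σ² / (1 - S)` and every `x k` is determined; `S < 1` makes the solution positive. -/

open Finset

/-- Matched-filter output SIR of user `k` at power profile `p`:
`γ_k(p) = N p_k h_k² / (N σ² + ∑_{j≠k} p_j h_j²)`. -/
noncomputable def mfSIR (K : ℕ) (N σ : ℝ) (h : Fin K → ℝ) (p : Fin K → ℝ)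
    (k : Fin K) : ℝ :=
  N * p k * (h k) ^ 2 / (N * σ ^ 2 + ∑ j ∈ univ.erase k, p j * (h j) ^ 2)

section

variable {ι : Type*} [Fintype ι]

theorem forall_eq_mul_add_sum_iff {a x : ι → ℝ} {c : ℝ} (hS : ∑ i, a i ≠ 1) :
    (∀ k, x k = a k * (c + ∑ j, x j)) ↔ x = fun k => a k * c / (1 - ∑ i, a i) := by
  have h1S : 1 - ∑ i, a i ≠ 0 := sub_ne_zero.mpr hS.symm
  constructor
  · intro hx
    have hsum : ∑ j, x j = (∑ i, a i) * (c + ∑ j, x j) :=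
      (sum_congr rfl fun j _ => hx j).trans (sum_mul _ _ _).symm
    have htotal : c + ∑ j, x j = c / (1 - ∑ i, a i) := by
      rw [eq_div_iff h1S]
      linear_combination hsum
    funext k
    rw [hx k, htotal, mul_div_assoc]
  · rintro rfl k
    rw [← sum_div, ← sum_mul]
    field_simp
    ring

theorem mul_eq_mul_add_sum_erase_iff [DecidableEq ι] {N γ c : ℝ} {x : ι → ℝ} (k : ι)
    (hNγ : N + γ ≠ 0) :
    N * x k = γ * (c + ∑ j ∈ univ.erase k, x j) ↔ x k = γ / (N + γ) * (c + ∑ j, x j) := by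
  rw [sum_erase_eq_sub (mem_univ k), div_mul_eq_mul_div, eq_div_iff hNγ]
  constructor <;> intro h <;> linear_combination h

end

theorem mfSIR_eq_iff {K : ℕ} {N σ γ : ℝ} {h p : Fin K → ℝ} (hN : 0 < N) (hσ : σ ≠ 0)
    (hp : ∀ j, 0 ≤ p j) (k : Fin K) :
    mfSIR K N σ h p k = γ ↔
      N * (p k * h k ^ 2) = γ * (N * σ ^ 2 + ∑ j ∈ univ.erase k, p j * h j ^ 2) := by
  have hD : 0 < N * σ ^ 2 + ∑ j ∈ univ.erase k, p j * h j ^ 2 :=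
    add_pos_of_pos_of_nonneg (by positivity)
      (sum_nonneg fun j _ => mul_nonneg (hp j) (sq_nonneg _))
  rw [mfSIR, div_eq_iff hD.ne', mul_assoc]

theorem mfSIR_eq_target_iff {K : ℕ} {N σ : ℝ} {h p γt : Fin K → ℝ} (hN : 0 < N) (hσ : σ ≠ 0)
    (hNγ : ∀ k, N + γt k ≠ 0) (hS : ∑ k, γt k / (N + γt k) ≠ 1) (hp : ∀ j, 0 ≤ p j) :
    (∀ k, mfSIR K N σ h p k = γt k) ↔
      (fun k => p k * h k ^ 2) =
        fun k => γt k / (N + γt k) * (N * σ ^ 2) / (1 - ∑ j, γt j / (N + γt j)) := by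
  rw [← forall_eq_mul_add_sum_iff hS]
  refine forall_congr' fun k => ?_
  rw [mfSIR_eq_iff hN hσ hp]
  exact mul_eq_mul_add_sum_erase_iff (x := fun j => p j * h j ^ 2) k (hNγ k)

/-- If `S = ∑_k γ̃_k/(N + γ̃_k) < 1`, then there is a unique vector of
positive powers achieving `γ_k(p) = γ̃_k` for all `k`, given explicitly by
`p_k = (1/h_k²) · N γ̃_k σ² / ((N + γ̃_k)(1 − S))`. -/
theorem mf_power_control_feasible (K : ℕ) (N σ : ℝ) (hN : 1 ≤ N) (hσ : 0 < σ)
    (h : Fin K → ℝ) (hh : ∀ k, 0 < h k)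
    (γt : Fin K → ℝ) (hγt : ∀ k, 0 < γt k)
    (hS : ∑ k, γt k / (N + γt k) < 1) :
    (∀ k, 0 < (1 / (h k) ^ 2) *
        (N * γt k * σ ^ 2 / ((N + γt k) * (1 - ∑ j, γt j / (N + γt j))))) ∧
    (∀ k, mfSIR K N σ h
        (fun j => (1 / (h j) ^ 2) *
          (N * γt j * σ ^ 2 / ((N + γt j) * (1 - ∑ i, γt i / (N + γt i))))) k = γt k) ∧
    (∀ q : Fin K → ℝ, (∀ k, 0 < q k) → (∀ k, mfSIR K N σ h q k = γt k) →
        q = fun j => (1 / (h j) ^ 2) *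
          (N * γt j * σ ^ 2 / ((N + γt j) * (1 - ∑ i, γt i / (N + γt i))))) := by
  have hN0 : 0 < N := one_pos.trans_le hN
  have hNγ : ∀ k, 0 < N + γt k := fun k => add_pos hN0 (hγt k)
  have h1S : 0 < 1 - ∑ j, γt j / (N + γt j) := sub_pos.mpr hS
  set p : Fin K → ℝ := fun j => (1 / (h j) ^ 2) *
    (N * γt j * σ ^ 2 / ((N + γt j) * (1 - ∑ i, γt i / (N + γt i))))
  have hp : ∀ k, 0 < p k := fun k => by
    have := hh k; have := hγt k; have := hNγ k
    positivity
  have hreceived : ∀ q : Fin K → ℝ, (fun k => q k * h k ^ 2) =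
      (fun k => γt k / (N + γt k) * (N * σ ^ 2) / (1 - ∑ j, γt j / (N + γt j))) ↔ q = p := by
    intro q
    simp only [funext_iff]
    refine forall_congr' fun k => ?_
    rw [← eq_div_iff (pow_ne_zero 2 (hh k).ne')]
    apply Eq.congr_right
    simp only [p]
    field_simp
  have hsir := fun q hq => mfSIR_eq_target_iff (h := h) (p := q) hN0 hσ.ne'
    (fun k => (hNγ k).ne') hS.ne hq
  exact ⟨hp, (hsir p fun k => (hp k).le).mpr ((hreceived p).mpr rfl),
    fun q hq hγ => (hreceived q).mp ((hsir q fun k => (hq k).le).mp hγ)⟩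
end

section
/- Consider K users with channel gains h₁,…,h_K > 0, noise power σ² > 0, processing gain N ≥ 1, and matched-filter output SIRs γ_k(p) = N p_k h_k² / (N σ² + ∑_{j≠k} p_j h_j²). Given target SIRs γ̃₁,…,γ̃_K > 0, if ∑_{k=1}^K γ̃_k/(N + γ̃_k) ≥ 1, then there exists no vector of nonnegative powers (p₁,…,p_K) with γ_k(p) ≥ γ̃_k for all k. -/
open Finset

/-- If `∑_k γ̃_k/(N + γ̃_k) ≥ 1`, then no vector of nonnegative powers
achieves `γ_k(p) ≥ γ̃_k` for all `k`. -/
theorem mf_power_control_infeasible (K : ℕ) (N σ : ℝ) (hN : 1 ≤ N) (hσ : 0 < σ)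
    (h : Fin K → ℝ) (hh : ∀ k, 0 < h k)
    (γt : Fin K → ℝ) (hγt : ∀ k, 0 < γt k)
    (hS : 1 ≤ ∑ k, γt k / (N + γt k)) :
    ¬ ∃ p : Fin K → ℝ, (∀ k, 0 ≤ p k) ∧ ∀ k, γt k ≤ mfSIR K N σ h p k := by
  rintro ⟨p, hp, hsir⟩
  have hN0 : (0:ℝ) < N := lt_of_lt_of_le one_pos hN
  set q : Fin K → ℝ := fun k => p k * (h k) ^ 2 with hq
  have hq0 : ∀ k, 0 ≤ q k := fun k => mul_nonneg (hp k) (sq_nonneg _)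
  set S : ℝ := ∑ k, q k with hSdef
  have hNσ : 0 < N * σ ^ 2 := mul_pos hN0 (pow_pos hσ 2)
  have herase : ∀ k : Fin K, ∑ j ∈ univ.erase k, q j = S - q k := by
    intro k
    have := Finset.sum_erase_add univ q (mem_univ k)
    linarith
  have hDpos : ∀ k : Fin K, 0 < N * σ ^ 2 + (S - q k) := by
    intro k
    have : 0 ≤ S - q k := by
      rw [← herase k]; exact Finset.sum_nonneg fun j _ => hq0 j
    linarith
  have key : ∀ k : Fin K, γt k / (N + γt k) * (N * σ ^ 2 + S) ≤ q k := by
    intro k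
    have hsir' := hsir k
    rw [mfSIR, herase k] at hsir'
    have h1 : γt k * (N * σ ^ 2 + (S - q k)) ≤ N * p k * (h k) ^ 2 :=
      (le_div_iff₀ (hDpos k)).mp hsir'
    have h2 : N * p k * (h k) ^ 2 = N * q k := by ring
    have hden : 0 < N + γt k := by have := hγt k; linarith
    rw [div_mul_eq_mul_div, div_le_iff₀ hden]
    nlinarith [hγt k]
  have hsum : ∑ k, γt k / (N + γt k) * (N * σ ^ 2 + S) ≤ S :=
    hSdef ▸ Finset.sum_le_sum fun k _ => key k
  rw [← Finset.sum_mul] at hsum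
  have hpos : 0 < N * σ ^ 2 + S := by
    have : 0 ≤ S := Finset.sum_nonneg fun j _ => hq0 j
    linarith
  nlinarith
end

section
/- Let f be a sigmoidal efficiency function with γ* the unique positive solution of f(γ) = γ f′(γ). Let α⁽¹⁾,…,α⁽ᶜ⁾ > 0 with ∑_c α⁽ᶜ⁾ = α, and let target SIRs satisfy γ̃⁽ᶜ⁾ ≥ γ* for all c with ∑_c α⁽ᶜ⁾ γ̃⁽ᶜ⁾ < 1. Then for every class c, the matched-filter equilibrium utility factor satisfies (1 − ∑_{c'} α⁽ᶜ'⁾ γ̃⁽ᶜ'⁾) · f(γ̃⁽ᶜ⁾)/γ̃⁽ᶜ⁾ ≤ (1 − α γ*) · f(γ*)/γ*, with strict inequality whenever γ̃⁽ᶜ'⁾ > γ* for at least one class c′. That is, the presence of users with stringent delay requirements reduces the matched-filter utility of every user in the network, not only of the delay-constrained users. -/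
/-- For a sigmoidal efficiency function `f` with `γ*` the unique positive
solution of `f γ = γ f' γ`, class loads `α c > 0` summing to `α`, and target SIRs
`γ̃ c ≥ γ*` with `∑ α c γ̃ c < 1`, the matched-filter equilibrium utility factor of
every class is at most its value in the absence of delay constraints,
`(1 − ∑ α c' γ̃ c') f(γ̃ c)/γ̃ c ≤ (1 − α γ*) f(γ*)/γ*`, with strict inequality
whenever some class has `γ̃ c' > γ*`. -/
theorem delay_constraints_reduce_mf_utility (f f' f'' : ℝ → ℝ)
    (hcontf : ContinuousOn f (Set.Ici 0))
    (hderiv : ∀ x : ℝ, 0 < x → HasDerivAt f (f' x) x)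
    (hcontf' : ContinuousOn f' (Set.Ioi 0))
    (hderiv2 : ∀ x : ℝ, 0 < x → HasDerivAt f' (f'' x) x)
    (hf0 : f 0 = 0)
    (hf'pos : ∀ x : ℝ, 0 < x → 0 < f' x)
    (hrange : ∀ x : ℝ, 0 ≤ x → 0 ≤ f x ∧ f x < 1)
    (hlim : Filter.Tendsto f Filter.atTop (nhds 1))
    (a : ℝ) (ha : 0 < a)
    (hconvex : ∀ x : ℝ, 0 < x → x < a → 0 < f'' x)
    (hconcave : ∀ x : ℝ, a < x → f'' x < 0)
    (g : ℝ) (hg : 0 < g) (hgeq : f g = g * f' g)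
    (hguniq : ∀ g' : ℝ, 0 < g' → f g' = g' * f' g' → g' = g)
    (C : ℕ) (hC : 1 ≤ C)
    (α γt : Fin C → ℝ) (hα : ∀ c, 0 < α c)
    (hγt : ∀ c, g ≤ γt c)
    (hload : ∑ c, α c * γt c < 1) :
    (∀ c : Fin C,
      (1 - ∑ c', α c' * γt c') * (f (γt c) / γt c) ≤
        (1 - (∑ c', α c') * g) * (f g / g)) ∧
    ((∃ c' : Fin C, g < γt c') → ∀ c : Fin C,
      (1 - ∑ c', α c' * γt c') * (f (γt c) / γt c) <
        (1 - (∑ c', α c') * g) * (f g / g)) := by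
  -- basic continuity of f and f' on positive reals
  have hfpos_cont : ContinuousOn f (Set.Ioi 0) := fun x hx =>
    ((hderiv x hx).continuousAt).continuousWithinAt
  -- f' is strictly monotone on (0, a]
  have hf'mono : StrictMonoOn f' (Set.Ioc 0 a) := by
    apply strictMonoOn_of_deriv_pos (convex_Ioc 0 a)
      (hcontf'.mono (fun x hx => hx.1))
    intro x hx
    rw [interior_Ioc] at hx
    rw [(hderiv2 x hx.1).deriv]
    exact hconvex x hx.1 hx.2
  -- a < g
  have hag : a < g := by
    by_contra hle
    push_neg at hle
    obtain ⟨c, hc, hc'⟩ := exists_hasDerivAt_eq_slope f f' hg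
      (hcontf.mono (Set.Icc_subset_Ici_self))
      (fun x hx => hderiv x hx.1)
    have hlt : f' c < f' g :=
      hf'mono ⟨hc.1, le_of_lt (lt_of_lt_of_le hc.2 hle)⟩ ⟨hg, hle⟩ hc.2
    rw [hf0, sub_zero, sub_zero] at hc'
    have : f g = g * f' c := by field_simp at hc'; linarith [hc']
    nlinarith [hgeq, this]
  -- x * f' x - f x < 0 for x > g
  have hφlt : ∀ x : ℝ, g < x → x * f' x - f x < 0 := by
    have hanti : StrictAntiOn (fun y => y * f' y - f y) (Set.Ici a) := by
      apply strictAntiOn_of_deriv_neg (convex_Ici a)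
      · exact ((continuousOn_id.mul (hcontf'.mono (fun x hx =>
          lt_of_lt_of_le ha hx))).sub (hfpos_cont.mono (fun x hx =>
          lt_of_lt_of_le ha hx)))
      · intro x hx
        rw [interior_Ici] at hx
        have hx0 : 0 < x := ha.trans hx
        have h1 : HasDerivAt (fun y => y * f' y - f y)
            (1 * f' x + x * f'' x - f' x) x :=
          ((hasDerivAt_id x).mul (hderiv2 x hx0)).sub (hderiv x hx0)
        rw [h1.deriv]
        have := hconcave x hx
        nlinarith
    intro x hx
    have h2 := hanti (Set.mem_Ici.mpr hag.le)
      (Set.mem_Ici.mpr (hag.trans hx).le) hx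
    simp only at h2
    nlinarith [hgeq, h2]
  -- f x / x is strictly decreasing on [g, ∞)
  have hanti : StrictAntiOn (fun y => f y / y) (Set.Ici g) := by
    apply strictAntiOn_of_deriv_neg (convex_Ici g)
    · exact (hfpos_cont.mono (fun x hx => lt_of_lt_of_le hg hx)).div
        continuousOn_id (fun x hx => ne_of_gt (lt_of_lt_of_le hg hx))
    · intro x hx
      rw [interior_Ici] at hx
      have hx0 : 0 < x := hg.trans hx
      have h1 : HasDerivAt (fun y => f y / y)
          ((f' x * x - f x * 1) / x ^ 2) x :=
        (hderiv x hx0).div (hasDerivAt_id x) (ne_of_gt hx0)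
      rw [h1.deriv]
      apply div_neg_of_neg_of_pos
      · have := hφlt x hx; nlinarith
      · positivity
  have hfgpos : 0 < f g / g := by
    apply div_pos _ hg
    rw [hgeq]; exact mul_pos hg (hf'pos g hg)
  -- ratio bound
  have hX : ∀ c : Fin C, f (γt c) / γt c ≤ f g / g := by
    intro c
    rcases eq_or_lt_of_le (hγt c) with h | h
    · rw [← h]
    · exact (hanti (Set.mem_Ici.mpr le_rfl)
        (Set.mem_Ici.mpr (hγt c)) h).le
  have hXnn : ∀ c : Fin C, 0 ≤ f (γt c) / γt c := fun c =>
    div_nonneg (hrange _ (hg.le.trans (hγt c))).1 (hg.trans_le (hγt c)).le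
  have hsum_le : (∑ c', α c') * g ≤ ∑ c', α c' * γt c' := by
    rw [Finset.sum_mul]
    exact Finset.sum_le_sum fun c _ =>
      mul_le_mul_of_nonneg_left (hγt c) (hα c).le
  have h1S : 0 < 1 - ∑ c', α c' * γt c' := by linarith
  constructor
  · intro c
    calc (1 - ∑ c', α c' * γt c') * (f (γt c) / γt c)
        ≤ (1 - (∑ c', α c') * g) * (f (γt c) / γt c) := by
          apply mul_le_mul_of_nonneg_right (by linarith) (hXnn c)
      _ ≤ (1 - (∑ c', α c') * g) * (f g / g) := by
          apply mul_le_mul_of_nonneg_left (hX c) (by linarith)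
  · rintro ⟨c', hc'⟩ c
    have hsum_lt : (∑ c'', α c'') * g < ∑ c'', α c'' * γt c'' := by
      rw [Finset.sum_mul]
      exact Finset.sum_lt_sum
        (fun i _ => mul_le_mul_of_nonneg_left (hγt i) (hα i).le)
        ⟨c', Finset.mem_univ c', by
          exact mul_lt_mul_of_pos_left hc' (hα c')⟩
    calc (1 - ∑ c'', α c'' * γt c'') * (f (γt c) / γt c)
        ≤ (1 - ∑ c'', α c'' * γt c'') * (f g / g) :=
          mul_le_mul_of_nonneg_left (hX c) h1S.le
      _ < (1 - (∑ c'', α c'') * g) * (f g / g) :=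
          mul_lt_mul_of_pos_right (by linarith) hfgpos
end
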